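/- Let (X,S) be a primitive unimodular proper S-adic subshift over the alphabet A. If (α_a)_{a∈A} is a family of integers such that ∑_{a∈A} α_a χ_[a] is a coboundary (i.e., equals g∘S − g for some g ∈ C(X,ℤ)), then α_a = 0 for all a ∈ A. Equivalently, the cohomology classes of the functions χ_[a], a ∈ A, are rationally independent. -/

import Mathlib

open MeasureTheory Filter

section SadicPrelude

variable {A : Type*}

/-- The shift map on bi-infinite words. -/
def shift (x : ℤ → A) : ℤ → A := fun n => x (n + 1)

/-- The word `w` occurs (as a factor) in the bi-infinite word `x`. -/
def OccursIn (w : List A) (x : ℤ → A) : Prop :=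
  ∃ i : ℤ, ∀ k : Fin w.length, x (i + (k.1 : ℤ)) = w.get k

/-- The language of a subshift `X`. -/
def Lang (X : Set (ℤ → A)) : Set (List A) := {w | ∃ x ∈ X, OccursIn w x}

/-- Apply a morphism (substitution) to a word, by concatenation. -/
def wordApply (σ : A → List A) (w : List A) : List A := w.flatMap σ

/-- Composition of morphisms: first apply `τ`, then `σ`. -/
def morComp (σ τ : A → List A) : A → List A := fun a => wordApply σ (τ a)

/-- A morphism is non-erasing if images of letters are nonempty. -/
def NonErasing (σ : A → List A) : Prop := ∀ a, σ a ≠ []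

/-- Incidence matrix of a morphism: entry `(b,a)` is the number of occurrences of `b` in `σ a`. -/
def incMat [Fintype A] [DecidableEq A] (σ : A → List A) : Matrix A A ℤ :=
  Matrix.of fun b a => ((σ a).count b : ℤ)

/-- A morphism is unimodular if its incidence matrix has determinant ±1. -/
def IsUnimodular [Fintype A] [DecidableEq A] (σ : A → List A) : Prop :=
  (incMat σ).det = 1 ∨ (incMat σ).det = -1

/-- Left proper: all images start with the same letter. -/
def IsLeftProper (σ : A → List A) : Prop := ∃ b : A, ∀ a, (σ a).head? = some b

/-- Right proper: all images end with the same letter. -/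
def IsRightProper (σ : A → List A) : Prop := ∃ b : A, ∀ a, (σ a).getLast? = some b

/-- Proper: left and right proper. -/
def IsProper (σ : A → List A) : Prop := IsLeftProper σ ∧ IsRightProper σ

/-- `compFrom τ n m` is the composition `τ_n ∘ τ_{n+1} ∘ ⋯ ∘ τ_{n+m-1}`. -/
def compFrom (τ : ℕ → A → List A) (n : ℕ) : ℕ → A → List A
  | 0 => fun a => [a]
  | m + 1 => morComp (compFrom τ n m) (τ (n + m))

/-- `compSeq τ n` is the composition `τ_0 ∘ τ_1 ∘ ⋯ ∘ τ_{n-1}`. -/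
def compSeq (τ : ℕ → A → List A) : ℕ → A → List A := compFrom τ 0

/-- The maximal length of images of letters under `τ_0 ∘ ⋯ ∘ τ_{n-1}` tends to infinity. -/
def GrowsUnbounded [Fintype A] (τ : ℕ → A → List A) : Prop :=
  Tendsto (fun n => Finset.univ.sup fun a : A => (compSeq τ n a).length) atTop atTop

/-- A directive sequence is primitive if for all `n` there is `m > 0` such that every letter
occurs in every image of `τ_n ∘ ⋯ ∘ τ_{n+m-1}`. -/
def IsPrimitive (τ : ℕ → A → List A) : Prop :=
  ∀ n : ℕ, ∃ m : ℕ, 0 < m ∧ ∀ a b : A, b ∈ compFrom τ n m a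

/-- The language of a directive sequence: all factors of the images `τ_0 ∘ ⋯ ∘ τ_{n-1}(a)`. -/
def SadicLang (τ : ℕ → A → List A) : Set (List A) :=
  {w | ∃ (n : ℕ) (a : A), w <:+: compSeq τ n a}

/-- The S-adic subshift generated by a directive sequence. -/
def SadicShift (τ : ℕ → A → List A) : Set (ℤ → A) :=
  {x | ∀ w : List A, OccursIn w x → w ∈ SadicLang τ}

/-- The shift map restricted to an invariant set `X`. -/
def shiftOn (X : Set (ℤ → A)) (h : ∀ x ∈ X, shift x ∈ X) : X → X :=
  fun x => ⟨shift x.1, h x.1 x.2⟩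

/-- The cylinder of a letter `a` inside `X`. -/
def cylLetter (X : Set (ℤ → A)) (a : A) : Set X := {x : X | x.1 0 = a}

/-- The cylinder of a word `w` inside `X`. -/
def cylWord (X : Set (ℤ → A)) (w : List A) : Set X :=
  {x : X | ∀ k : Fin w.length, x.1 (k.1 : ℤ) = w.get k}

/-- `μ` is a `T`-invariant Borel probability measure. -/
def InvProb {Y : Type*} [MeasurableSpace Y] (T : Y → Y) (μ : Measure Y) : Prop :=
  IsProbabilityMeasure μ ∧ MeasurePreserving T μ μ

/-- A real-valued function is balanced for the dynamical system given by `T`. -/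
def IsBalanced {Y : Type*} (T : Y → Y) (f : Y → ℝ) : Prop :=
  ∃ C : ℝ, 0 < C ∧ ∀ x y : Y, ∀ n : ℕ,
    |∑ i ∈ Finset.range (n + 1), (f (T^[i] x) - f (T^[i] y))| ≤ C

end SadicPrelude
section Comb
variable {A : Type*}

theorem wordApply_append (σ : A → List A) (u v : List A) :
    wordApply σ (u ++ v) = wordApply σ u ++ wordApply σ v := by
  simp [wordApply]

theorem wordApply_cons (σ : A → List A) (a : A) (u : List A) :
    wordApply σ (a :: u) = σ a ++ wordApply σ u := by
  simp [wordApply]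

theorem wordApply_wordApply (σ ρ : A → List A) (w : List A) :
    wordApply σ (wordApply ρ w) = wordApply (morComp σ ρ) w := by
  induction w with
  | nil => rfl
  | cons a w ih => simp [wordApply_cons, wordApply_append, ih, morComp]

theorem compFrom_add (τ : ℕ → A → List A) (n p q : ℕ) (a : A) :
    compFrom τ n (p + q) a = wordApply (compFrom τ n p) (compFrom τ (n + p) q a) := by
  induction q generalizing a with
  | zero => simp [compFrom, wordApply]
  | succ q ih =>
      have hfun : compFrom τ n (p + q) = morComp (compFrom τ n p) (compFrom τ (n + p) q) :=
        funext fun a => ih a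
      have hnp : n + p + q = n + (p + q) := by ring
      show morComp (compFrom τ n (p + q)) (τ (n + (p + q))) a = _
      show wordApply (compFrom τ n (p + q)) (τ (n + (p + q)) a) = _
      rw [show compFrom τ (n+p) (q+1) a = wordApply (compFrom τ (n+p) q) (τ (n + p + q) a) from rfl,
        wordApply_wordApply, hfun, hnp]

theorem wordApply_ne_nil {σ : A → List A} (hσ : NonErasing σ) {w : List A} (hw : w ≠ []) :
    wordApply σ w ≠ [] := by
  cases w with
  | nil => exact absurd rfl hw
  | cons a u =>
      simp only [wordApply_cons, ne_eq, List.append_eq_nil_iff]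
      intro ⟨h1, _⟩
      exact hσ a h1

theorem compFrom_ne_nil {τ : ℕ → A → List A} (hner : ∀ n, NonErasing (τ n))
    (n m : ℕ) (a : A) : compFrom τ n m a ≠ [] := by
  induction m generalizing a with
  | zero => simp [compFrom]
  | succ m ih =>
      simp only [compFrom, morComp]
      exact wordApply_ne_nil (fun b => ih b) (hner (n + m) a)

theorem infix_wordApply (σ : A → List A) {u v : List A} (h : u <:+: v) :
    wordApply σ u <:+: wordApply σ v := by
  obtain ⟨s, t, rfl⟩ := h
  exact ⟨wordApply σ s, wordApply σ t, by simp [wordApply_append]⟩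

theorem sadicLang_infix {τ : ℕ → A → List A} {u w : List A} (h : u <:+: w)
    (hw : w ∈ SadicLang τ) : u ∈ SadicLang τ := by
  obtain ⟨n, a, hn⟩ := hw
  exact ⟨n, a, h.trans hn⟩

theorem le_length_wordApply_of_mem {σ : A → List A} {b : A} {u : List A} (hb : b ∈ u) :
    (σ b).length ≤ (wordApply σ u).length := by
  obtain ⟨l, r, rfl⟩ := List.append_of_mem hb
  simp [wordApply_append, wordApply_cons]
  omega

end Comb
section Comb2
variable {A : Type*}

theorem sandwich {l r : List A} (hl : l ≠ []) (hr : r ≠ []) (w : List A) :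
    ∃ d e, (d :: (w ++ [e])) <:+: l ++ w ++ r := by
  refine ⟨l.getLast hl, r.head hr, l.dropLast, r.tail, ?_⟩
  conv_rhs => rw [← List.dropLast_append_getLast hl, ← List.cons_head_tail hr]
  simp

theorem two_le_length_of_two_mem {a b : A} {l : List A} (ha : a ∈ l) (hb : b ∈ l)
    (hab : a ≠ b) : 2 ≤ l.length := by
  match l, ha with
  | [x], ha => simp_all
  | x :: y :: t, _ => simp

theorem length_wordApply_le {σ : A → List A} {u : List A} {k : ℕ}
    (h : ∀ b ∈ u, k ≤ (σ b).length) : k * u.length ≤ (wordApply σ u).length := by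
  induction u with
  | nil => simp [wordApply]
  | cons c u ih =>
      simp only [wordApply_cons, List.length_append, List.length_cons]
      have h1 := h c (by simp)
      have h2 := ih fun b hb => h b (by simp [hb])
      nlinarith

variable [Fintype A]

theorem exists_pair_ne_of_card (hcard : 2 ≤ Fintype.card A) : ∃ a b : A, a ≠ b :=
  Fintype.exists_pair_of_one_lt_card (by omega)

/-- Every letter occurs with a letter before and after it in some image. -/
theorem interior_occ (hcard : 2 ≤ Fintype.card A) {τ : ℕ → A → List A}
    (hner : ∀ n, NonErasing (τ n)) (hprim : IsPrimitive τ) (n : ℕ) (a : A) :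
    ∃ M c d e, [d, a, e] <:+: compFrom τ n M c := by
  obtain ⟨m1, -, hm1⟩ := hprim n
  obtain ⟨m2, -, hm2⟩ := hprim (n + m1)
  obtain ⟨m3, -, hm3⟩ := hprim (n + m1 + m2)
  obtain ⟨a1, a2, ha12⟩ := exists_pair_ne_of_card hcard
  set c := a1 with hc
  set v := compFrom τ (n + m1) (m2 + m3) c with hv
  have hvlen : 3 ≤ v.length := by
    have hv' : v = wordApply (compFrom τ (n + m1) m2) (compFrom τ (n + m1 + m2) m3 c) :=
      compFrom_add τ (n + m1) m2 m3 c
    have hlen2 : 2 ≤ (compFrom τ (n + m1 + m2) m3 c).length :=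
      two_le_length_of_two_mem (hm3 c a1) (hm3 c a2) ha12
    have := length_wordApply_le (σ := compFrom τ (n + m1) m2)
      (u := compFrom τ (n + m1 + m2) m3 c) (k := 2)
      (fun b _ => two_le_length_of_two_mem (hm2 b a1) (hm2 b a2) ha12)
    rw [← hv'] at this
    omega
  match hvv : v, hvlen with
  | v0 :: v1 :: v2 :: rest, _ =>
    have hav1 : a ∈ compFrom τ n m1 v1 := hm1 v1 a
    obtain ⟨l, r, hlr⟩ := List.append_of_mem hav1
    refine ⟨m1 + (m2 + m3), c, ?_⟩
    have hW : compFrom τ n (m1 + (m2 + m3)) c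
        = wordApply (compFrom τ n m1) v := by
      rw [compFrom_add]
    have hW2 : compFrom τ n (m1 + (m2 + m3)) c
        = (compFrom τ n m1 v0 ++ l) ++ a ::
            (r ++ (compFrom τ n m1 v2 ++ wordApply (compFrom τ n m1) rest)) := by
      rw [hW, hvv]
      simp [wordApply_cons, hlr]
    have hlne : compFrom τ n m1 v0 ++ l ≠ [] := by
      simp [compFrom_ne_nil hner n m1 v0]
    have hrne : r ++ (compFrom τ n m1 v2 ++ wordApply (compFrom τ n m1) rest) ≠ [] := by
      simp [compFrom_ne_nil hner n m1 v2]
    obtain ⟨d, e, hde⟩ := sandwich hlne hrne [a]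
    exact ⟨d, e, by rw [hW2]; simpa using hde⟩

/-- Extension lemma: every word of the language extends by a letter on each side. -/
theorem sadicLang_extend (hcard : 2 ≤ Fintype.card A) {τ : ℕ → A → List A}
    (hner : ∀ n, NonErasing (τ n)) (hprim : IsPrimitive τ) {w : List A}
    (hw : w ∈ SadicLang τ) : ∃ d e, (d :: (w ++ [e])) ∈ SadicLang τ := by
  obtain ⟨n, a, l, r, hlr⟩ := hw
  obtain ⟨M, c, d', e', hint⟩ := interior_occ hcard hner hprim n a
  have hinf : wordApply (compSeq τ n) [d', a, e'] <:+: compSeq τ (n + M) c := by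
    have := infix_wordApply (compSeq τ n) hint
    rwa [show wordApply (compSeq τ n) (compFrom τ n M c) = compSeq τ (n + M) c by
      simp only [compSeq]; rw [compFrom_add τ 0 n M c]; norm_num] at this
  have hexp : wordApply (compSeq τ n) [d', a, e']
      = (compSeq τ n d' ++ l) ++ w ++ (r ++ compSeq τ n e') := by
    simp [wordApply, ← hlr]
  have hlne : compSeq τ n d' ++ l ≠ [] := by
    simp [compSeq, compFrom_ne_nil hner 0 n d']
  have hrne : r ++ compSeq τ n e' ≠ [] := by
    simp [compSeq, compFrom_ne_nil hner 0 n e']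
  obtain ⟨d, e, hde⟩ := sandwich hlne hrne w
  rw [← hexp] at hde
  exact ⟨d, e, n + M, c, hde.trans hinf⟩

/-- Minimal image lengths tend to infinity. -/
theorem min_length_large {τ : ℕ → A → List A} (hner : ∀ n, NonErasing (τ n))
    (hgrow : GrowsUnbounded τ) (hprim : IsPrimitive τ) (L : ℕ) :
    ∃ n, ∀ a, L < (compSeq τ n a).length := by
  obtain ⟨n0, hn0⟩ := (hgrow.eventually_gt_atTop L).exists
  obtain ⟨b, -, hb⟩ := Finset.lt_sup_iff.1 hn0
  obtain ⟨m, -, hm⟩ := hprim n0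
  refine ⟨n0 + m, fun a => ?_⟩
  have hcomp : compSeq τ (n0 + m) a = wordApply (compSeq τ n0) (compFrom τ n0 m a) := by
    simp only [compSeq]; rw [compFrom_add τ 0 n0 m a]; norm_num
  have := le_length_wordApply_of_mem (σ := compSeq τ n0) (hm a b)
  rw [← hcomp] at this
  omega

end Comb2
section Point
variable {A : Type*}

/-- Occurrence at a specified index. -/
def OccAt (w : List A) (x : ℤ → A) (i : ℤ) : Prop :=
  ∀ k : Fin w.length, x (i + (k.1 : ℤ)) = w.get k

open Classical in
/-- Iterated two-sided extension of a word inside a language `P`. -/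
noncomputable def extendN (P : Set (List A)) (w : List A) : ℕ → List A
  | 0 => w
  | k+1 =>
      if h : ∃ v, v ∈ P ∧ ∃ d e, v = d :: (extendN P w k ++ [e]) then h.choose
      else extendN P w k

theorem extendN_step {P : Set (List A)}
    (hext : ∀ u ∈ P, ∃ d e, (d :: (u ++ [e])) ∈ P) {w : List A} (k : ℕ)
    (hmem : extendN P w k ∈ P) :
    extendN P w (k+1) ∈ P ∧ ∃ d e, extendN P w (k+1) = d :: (extendN P w k ++ [e]) := by
  classical
  obtain ⟨d, e, hde⟩ := hext _ hmem
  have hex : ∃ v, v ∈ P ∧ ∃ d e, v = d :: (extendN P w k ++ [e]) :=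
    ⟨d :: (extendN P w k ++ [e]), hde, d, e, rfl⟩
  rw [show extendN P w (k+1)
      = if h : ∃ v, v ∈ P ∧ ∃ d e, v = d :: (extendN P w k ++ [e]) then h.choose
        else extendN P w k from rfl, dif_pos hex]
  exact hex.choose_spec

theorem extendN_mem {P : Set (List A)}
    (hext : ∀ u ∈ P, ∃ d e, (d :: (u ++ [e])) ∈ P) {w : List A} (hw : w ∈ P) (k : ℕ) :
    extendN P w k ∈ P := by
  induction k with
  | zero => exact hw
  | succ k ih => exact (extendN_step hext k ih).1

theorem extendN_succ {P : Set (List A)}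
    (hext : ∀ u ∈ P, ∃ d e, (d :: (u ++ [e])) ∈ P) {w : List A} (hw : w ∈ P) (k : ℕ) :
    ∃ d e, extendN P w (k+1) = d :: (extendN P w k ++ [e]) :=
  (extendN_step hext k (extendN_mem hext hw k)).2

theorem extendN_length {P : Set (List A)}
    (hext : ∀ u ∈ P, ∃ d e, (d :: (u ++ [e])) ∈ P) {w : List A} (hw : w ∈ P) (k : ℕ) :
    (extendN P w k).length = w.length + 2 * k := by
  induction k with
  | zero => simp [extendN]
  | succ k ih =>
      obtain ⟨d, e, hshape⟩ := extendN_succ hext hw k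
      rw [hshape]
      simp [ih]; omega

theorem extendN_consist {P : Set (List A)}
    (hext : ∀ u ∈ P, ∃ d e, (d :: (u ++ [e])) ∈ P) {w : List A} (hw : w ∈ P)
    (a₀ : A) (k m j : ℕ) (hj : j < (extendN P w k).length) :
    (extendN P w (k + m)).getD (j + m) a₀ = (extendN P w k).getD j a₀ := by
  induction m with
  | zero => rfl
  | succ m ih =>
      obtain ⟨d, e, hshape⟩ := extendN_succ hext hw (k + m)
      have hjm : j + m < (extendN P w (k+m)).length := by
        rw [extendN_length hext hw] at hj ⊢; omega
      rw [show k + (m+1) = (k+m)+1 by ring, hshape, ← ih]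
      show ((d :: (extendN P w (k+m) ++ [e])).getD (j + m + 1) a₀) = _
      rw [List.getD_cons_succ]
      rw [List.getD_eq_getElem?_getD, List.getD_eq_getElem?_getD,
        List.getElem?_append_left hjm]

theorem exists_point_of_extend {P : Set (List A)} (a₀ : A)
    (hfac : ∀ u v : List A, u <:+: v → v ∈ P → u ∈ P)
    (hext : ∀ u ∈ P, ∃ d e, (d :: (u ++ [e])) ∈ P)
    {w : List A} (hw : w ∈ P) (i₀ : ℤ) :
    ∃ x : ℤ → A, (∀ v, OccursIn v x → v ∈ P) ∧ OccAt w x i₀ := by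
  classical
  set W := extendN P w with hW
  set Valid : ℕ → ℤ → Prop := fun k j => 0 ≤ j - i₀ + k ∧ j - i₀ + k < w.length + 2 * k
    with hValid
  set φ : ℤ → ℕ → A := fun j k => (W k).getD (j - i₀ + k).toNat a₀ with hφ
  have hlen : ∀ k, (W k).length = w.length + 2 * k := extendN_length hext hw
  have phi_mono : ∀ k m j, Valid k j → φ j (k + m) = φ j k := by
    intro k m j ⟨h0, h1⟩
    have hc := extendN_consist hext hw a₀ k m (j - i₀ + k).toNat
      (by rw [extendN_length hext hw]; omega)
    have harg : (j - i₀ + ((k:ℤ) + (m:ℤ))).toNat = (j - i₀ + k).toNat + m := by omega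
    show (W (k + m)).getD (j - i₀ + ((k + m : ℕ) : ℤ)).toNat a₀ = (W k).getD _ a₀
    rw [Nat.cast_add, harg]
    exact hc
  have phi_eq : ∀ k1 k2 j, Valid k1 j → Valid k2 j → φ j k1 = φ j k2 := by
    intro k1 k2 j h1 h2
    rcases le_total k1 k2 with h | h
    · rw [show k2 = k1 + (k2 - k1) by omega, phi_mono k1 (k2-k1) j h1]
    · rw [show k1 = k2 + (k1 - k2) by omega, phi_mono k2 (k1-k2) j h2]
  set K : ℤ → ℕ := fun j => (j - i₀).toNat + (i₀ - j).toNat + w.length + 1 with hK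
  have hKvalid : ∀ j, Valid (K j) j := by
    intro j; constructor <;> · simp only [hK]; push_cast; omega
  set x : ℤ → A := fun j => φ j (K j) with hx
  have hx_eq : ∀ j k, Valid k j → x j = φ j k := fun j k hv =>
    phi_eq (K j) k j (hKvalid j) hv
  refine ⟨x, ?_, ?_⟩
  · rintro v ⟨i, hocc⟩
    set ℓ := v.length with hℓ
    set k : ℕ := (i - i₀).toNat + (i₀ - i).toNat + ℓ + 1 with hk
    have hk1 : i₀ - k ≤ i := by simp only [hk]; push_cast; omega
    have hk2 : i + ℓ ≤ i₀ + w.length + k := by simp only [hk]; push_cast; omega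
    set d : ℕ := (i - i₀ + k).toNat with hd
    have hdl : (d : ℤ) = i - i₀ + k := by simp only [hd]; omega
    have hdle : d + ℓ ≤ (W k).length := by rw [hlen]; omega
    have hveq : v = ((W k).drop d).take ℓ := by
      apply List.ext_getElem
      · simp [hℓ]; omega
      · intro m hm1 hm2
        have hm : m < ℓ := hm1
        have h1 : x (i + m) = v[m] := by
          have := hocc ⟨m, hm1⟩
          simpa using this
        have hvalid : Valid k (i + m) := by
          constructor
          · push_cast; omega
          · push_cast; omega
        have h2 : x (i + m) = (W k).getD (i + m - i₀ + k).toNat a₀ := hx_eq _ _ hvalid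
        have harg : (i + (m:ℤ) - i₀ + k).toNat = d + m := by omega
        have h3 : (W k).getD (d + m) a₀ = (W k)[d + m]'(by omega) := by
          rw [List.getD_eq_getElem?_getD, List.getElem?_eq_getElem (by omega)]
          rfl
        rw [← h1, h2, harg, h3]
        simp
    have hinfix : ((W k).drop d).take ℓ <:+: W k :=
      (List.take_prefix ℓ _).isInfix.trans (List.drop_suffix d _).isInfix
    rw [hveq]
    exact hfac _ _ hinfix (extendN_mem hext hw k)
  · intro m
    have hvalid : Valid 0 (i₀ + m.1) := by
      have := m.2
      constructor
      · push_cast; omega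
      · push_cast; omega
    rw [hx_eq _ 0 hvalid]
    show (W 0).getD (i₀ + (m.1:ℤ) - i₀ + ((0:ℕ):ℤ)).toNat a₀ = w.get m
    have harg : (i₀ + (m.1:ℤ) - i₀ + ((0:ℕ):ℤ)).toNat = m.1 := by push_cast; omega
    rw [harg, show W 0 = w from rfl, List.getD_eq_getElem?_getD,
      List.getElem?_eq_getElem m.2]
    simp [List.get_eq_getElem]

end Point
section Topo
variable {A : Type*} [TopologicalSpace A] [DiscreteTopology A]

theorem sadicShift_isClosed [Fintype A] (τ : ℕ → A → List A) :
    IsClosed (SadicShift τ) := by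
  rw [← isOpen_compl_iff]
  have hcompl : (SadicShift τ)ᶜ =
      ⋃ (w : List A) (_ : w ∉ SadicLang τ) (i : ℤ),
        ⋂ k : Fin w.length, {x : ℤ → A | x (i + (k.1 : ℤ)) = w.get k} := by
    ext x
    simp only [Set.mem_compl_iff, SadicShift, Set.mem_setOf_eq, Set.mem_iUnion,
      Set.mem_iInter, OccursIn]
    push_neg
    constructor
    · rintro ⟨w, ⟨i, hi⟩, hw⟩; exact ⟨w, hw, i, fun k => hi k⟩
    · rintro ⟨w, hw, i, hi⟩; exact ⟨w, ⟨i, hi⟩, hw⟩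
  rw [hcompl]
  refine isOpen_iUnion fun w => isOpen_iUnion fun _ => isOpen_iUnion fun i =>
    isOpen_iInter_of_finite fun k => ?_
  have heq : {x : ℤ → A | x (i + (k.1 : ℤ)) = w.get k}
      = (fun x : ℤ → A => x (i + (k.1 : ℤ))) ⁻¹' {w.get k} := rfl
  rw [heq]
  exact (continuous_apply _).isOpen_preimage _ (isOpen_discrete _)

theorem exists_radius [Fintype A] {X : Set (ℤ → A)} (hXc : IsClosed X) (g : C(↥X, ℤ)) :
    ∃ L : ℕ, ∀ x y : ↥X, (∀ i : ℤ, -(L : ℤ) ≤ i → i ≤ L → x.1 i = y.1 i) → g x = g y := by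
  classical
  haveI : CompactSpace ↥X := isCompact_iff_compactSpace.1 hXc.isCompact
  by_contra hcon
  push_neg at hcon
  set D : ℕ → Set (↥X × ↥X) := fun n =>
    {p | (∀ i : ℤ, -(n : ℤ) ≤ i → i ≤ n → p.1.1 i = p.2.1 i) ∧ g p.1 ≠ g p.2} with hD
  have hDclosed : ∀ n, IsClosed (D n) := by
    intro n
    have h1 : IsClosed {p : ↥X × ↥X | ∀ i : ℤ, -(n : ℤ) ≤ i → i ≤ n → p.1.1 i = p.2.1 i} := by
      have : {p : ↥X × ↥X | ∀ i : ℤ, -(n : ℤ) ≤ i → i ≤ n → p.1.1 i = p.2.1 i} =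
          ⋂ (i : ℤ) (_ : -(n : ℤ) ≤ i) (_ : i ≤ n),
            {p : ↥X × ↥X | p.1.1 i = p.2.1 i} := by
        ext p; simp [Set.mem_iInter]
      rw [this]
      refine isClosed_iInter fun i => isClosed_iInter fun _ => isClosed_iInter fun _ => ?_
      have hc : Continuous fun p : ↥X × ↥X => (p.1.1 i, p.2.1 i) :=
        ((continuous_apply i).comp (continuous_subtype_val.comp continuous_fst)).prodMk
          ((continuous_apply i).comp (continuous_subtype_val.comp continuous_snd))
      exact isClosed_eq hc.fst hc.snd
    have h2 : IsClosed {p : ↥X × ↥X | g p.1 ≠ g p.2} := by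
      have hc : Continuous fun p : ↥X × ↥X => (g p.1, g p.2) :=
        (g.continuous.comp continuous_fst).prodMk (g.continuous.comp continuous_snd)
      have : {p : ↥X × ↥X | g p.1 ≠ g p.2} =
          (fun p : ↥X × ↥X => (g p.1, g p.2)) ⁻¹' (Set.diagonal ℤ)ᶜ := by
        ext p; simp [Set.diagonal]
      rw [this]
      exact ((isOpen_discrete (Set.diagonal ℤ)).isClosed_compl).preimage hc
    exact h1.inter h2
  have hDmono : ∀ n, D (n+1) ⊆ D n := by
    rintro n p ⟨h1, h2⟩
    exact ⟨fun i hi1 hi2 => h1 i (by push_cast; omega) (by push_cast; omega), h2⟩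
  have hDne : ∀ n, (D n).Nonempty := by
    intro n
    obtain ⟨x, y, hagree, hne⟩ := hcon n
    exact ⟨(x, y), hagree, hne⟩
  have hcompact : IsCompact (D 0) := (hDclosed 0).isCompact
  obtain ⟨⟨x, y⟩, hp⟩ := IsCompact.nonempty_iInter_of_sequence_nonempty_isCompact_isClosed
    D hDmono hDne hcompact hDclosed
  simp only [Set.mem_iInter] at hp
  have hxy : x = y := by
    apply Subtype.ext; funext i
    exact (hp (i.toNat + (-i).toNat)).1 i (by push_cast; omega) (by push_cast; omega)
  exact (hp 0).2 (by rw [hxy])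

end Topo
section Alg
variable {A : Type*} [Fintype A] [DecidableEq A]

theorem count_wordApply (σ : A → List A) (u : List A) (b : A) :
    (wordApply σ u).count b = ∑ c : A, u.count c * (σ c).count b := by
  induction u with
  | nil => simp [wordApply]
  | cons c u ih =>
      rw [wordApply_cons, List.count_append, ih]
      have hcount : ∀ c' : A, (c :: u).count c' = u.count c' + if c' = c then 1 else 0 := by
        intro c'
        rcases eq_or_ne c' c with hcc | hcc
        · subst hcc; simp [List.count_cons_self]
        · simp [List.count_cons_of_ne (Ne.symm hcc), hcc]
      have hrhs : ∑ c' : A, (c :: u).count c' * (σ c').count b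
          = (∑ c' : A, u.count c' * (σ c').count b) + (σ c).count b := by
        rw [Finset.sum_congr rfl (fun c' _ => by rw [hcount c', add_mul]),
          Finset.sum_add_distrib]
        congr 1
        rw [Finset.sum_congr rfl (fun c' _ => by rw [ite_mul, one_mul, zero_mul])]
        simpa using Finset.sum_ite_eq' Finset.univ c fun c' => (σ c').count b
      rw [hrhs, add_comm]

theorem incMat_morComp (σ ρ : A → List A) :
    incMat (morComp σ ρ) = incMat σ * incMat ρ := by
  ext b a
  simp only [incMat, Matrix.of_apply, Matrix.mul_apply, morComp]
  rw [count_wordApply]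
  push_cast
  exact Finset.sum_congr rfl fun c _ => by ring

theorem isUnit_det_incMat_compSeq {τ : ℕ → A → List A} (huni : ∀ n, IsUnimodular (τ n))
    (n : ℕ) : IsUnit (incMat (compSeq τ n)).det := by
  induction n with
  | zero =>
      have : incMat (compSeq τ 0) = 1 := by
        ext b a
        simp [incMat, compSeq, compFrom, Matrix.one_apply, List.count_singleton',
          eq_comm]
      rw [this]; simp
  | succ n ih =>
      have hstep : compSeq τ (n+1) = morComp (compSeq τ n) (τ n) := by
        show compFrom τ 0 (n+1) = _
        show morComp (compFrom τ 0 n) (τ (0 + n)) = _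
        rw [Nat.zero_add]; rfl
      rw [hstep, incMat_morComp, Matrix.det_mul]
      refine ih.mul ?_
      rcases huni n with h | h <;> rw [h] <;> simp

theorem alpha_zero_of_mulVec {σ : A → List A} (hdet : IsUnit (incMat σ).det)
    {α : A → ℤ} (hzero : ∀ a, ∑ b : A, ((σ a).count b : ℤ) * α b = 0) : ∀ a, α a = 0 := by
  have hdet' : IsUnit ((incMat σ).transpose).det := by rwa [Matrix.det_transpose]
  haveI : Invertible ((incMat σ).transpose) := Matrix.invertibleOfIsUnitDet _ hdet'
  have hmv : ((incMat σ).transpose).mulVec α = 0 := by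
    funext a
    simp only [Matrix.mulVec, dotProduct, Matrix.transpose_apply, Pi.zero_apply]
    simpa [incMat] using hzero a
  have : α = 0 := by
    calc α = (1 : Matrix A A ℤ).mulVec α := (Matrix.one_mulVec α).symm
    _ = ((⅟((incMat σ).transpose)) * (incMat σ).transpose).mulVec α := by rw [invOf_mul_self]
    _ = (⅟((incMat σ).transpose)).mulVec (((incMat σ).transpose).mulVec α) := (Matrix.mulVec_mulVec _ _ _).symm
    _ = 0 := by rw [hmv, Matrix.mulVec_zero]
  exact fun a => congrFun this a

theorem sum_getD_map {B : Type*} (w : List A) (f : A → B) (b₀ : A) [AddCommMonoid B] :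
    ∑ i ∈ Finset.range w.length, f (w.getD i b₀) = (w.map f).sum := by
  induction w with
  | nil => simp
  | cons c w ih =>
      rw [List.length_cons, Finset.sum_range_succ']
      simp only [List.getD_cons_succ, List.getD_cons_zero, ih]
      simp [add_comm]

theorem sum_map_eq_sum_count (w : List A) (α : A → ℤ) :
    (w.map α).sum = ∑ b : A, (w.count b : ℤ) * α b := by
  induction w with
  | nil => simp
  | cons c w ih =>
      have : ∀ b : A, ((c :: w).count b : ℤ) = (w.count b : ℤ) + if b = c then 1 else 0 := by
        intro b
        rcases eq_or_ne b c with hbc | hbc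
        · subst hbc; simp [List.count_cons_self]
        · simp [List.count_cons_of_ne (Ne.symm hbc), hbc]
      simp only [List.map_cons, List.sum_cons, ih, this, add_mul, Finset.sum_add_distrib,
        ite_mul, one_mul, zero_mul, Finset.sum_ite_eq' Finset.univ c α]
      simp [add_comm]

end Alg

section OccAtLemmas
variable {A : Type*}

theorem occAt_append_left {u v : List A} {x : ℤ → A} {i : ℤ}
    (h : OccAt (u ++ v) x i) : OccAt u x i := by
  intro k
  have hk : (k.1 : ℕ) < (u ++ v).length := by
    rw [List.length_append]; omega
  have h2 := h ⟨k.1, hk⟩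
  have h3 : (u ++ v).get ⟨k.1, hk⟩ = u.get k := by
    simp only [List.get_eq_getElem]
    exact List.getElem_append_left k.2
  rw [h3] at h2
  exact h2

theorem occAt_append_right {u v : List A} {x : ℤ → A} {i : ℤ}
    (h : OccAt (u ++ v) x i) : OccAt v x (i + u.length) := by
  intro k
  have hk : u.length + k.1 < (u ++ v).length := by
    rw [List.length_append]; omega
  have h2 := h ⟨u.length + k.1, hk⟩
  have h3 : (u ++ v).get ⟨u.length + k.1, hk⟩ = v.get k := by
    simp only [List.get_eq_getElem]
    rw [List.getElem_append_right (by omega)]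
    simp
  rw [h3] at h2
  rw [← h2]
  congr 1
  push_cast
  ring

theorem occAt_congr {w : List A} {x : ℤ → A} {i i' : ℤ} (hii : i = i')
    (h : OccAt w x i) : OccAt w x i' := hii ▸ h

end OccAtLemmas
theorem stmt7 {A : Type*} [Fintype A] [DecidableEq A] [TopologicalSpace A] [DiscreteTopology A]
    (hcard : 2 ≤ Fintype.card A)
    (τ : ℕ → A → List A) (hner : ∀ n, NonErasing (τ n)) (hgrow : GrowsUnbounded τ)
    (hprim : IsPrimitive τ) (huni : ∀ n, IsUnimodular (τ n)) (hprop : ∀ n, IsProper (τ n))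
    (X : Set (ℤ → A)) (hX : X = SadicShift τ)
    (hS : ∀ x ∈ X, shift x ∈ X)
    (α : A → ℤ) (g : C(↥X, ℤ))
    (h : ∀ x : ↥X,
      (∑ a : A, α a * (if x.1 0 = a then (1 : ℤ) else 0)) =
        g (shiftOn X hS x) - g x) :
    ∀ a : A, α a = 0 := by
  subst hX
  obtain ⟨L, hL⟩ := exists_radius (sadicShift_isClosed τ) g
  obtain ⟨n, hn⟩ := min_length_large hner hgrow hprim L
  obtain ⟨b, hb⟩ := (hprop n).1
  obtain ⟨b', hb'⟩ := (hprop n).2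
  have hstep : compSeq τ (n+1) = morComp (compSeq τ n) (τ n) := by
    show compFrom τ 0 (n+1) = _
    show morComp (compFrom τ 0 n) (τ (0 + n)) = _
    rw [Nat.zero_add]; rfl
  suffices hzero : ∀ a : A, ∑ c : A, (((compSeq τ (n+1)) a).count c : ℤ) * α c = 0 by
    exact alpha_zero_of_mulVec (isUnit_det_incMat_compSeq huni (n+1)) hzero
  intro a
  -- decompose τ n a
  have hcons : ∀ z : A, τ n z = b :: (τ n z).tail := by
    intro z
    cases hta : τ n z with
    | nil => exact absurd hta (hner n z)
    | cons c t =>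
        have := hb z
        rw [hta] at this
        simp only [List.head?_cons, Option.some.injEq] at this
        rw [this]
        rfl
  have hdrop : ∀ z : A, (τ n z).dropLast ++ [b'] = τ n z := by
    intro z
    exact List.dropLast_append_getLast? b' (by simp [hb' z])
  have hw_eq : compSeq τ (n+1) a = wordApply (compSeq τ n) (τ n a) := by rw [hstep]; rfl
  -- w = p ++ m₁ and w = m₂ ++ s
  have hwp : compSeq τ (n+1) a
      = compSeq τ n b ++ wordApply (compSeq τ n) ((τ n a).tail) := by
    rw [hw_eq]
    conv_lhs => rw [hcons a]
    rw [wordApply_cons]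
  have hws : compSeq τ (n+1) a
      = wordApply (compSeq τ n) ((τ n a).dropLast) ++ compSeq τ n b' := by
    rw [hw_eq]
    conv_lhs => rw [← hdrop a]
    rw [wordApply_append]
    simp [wordApply]
  -- the context word V = s ++ (w ++ p) is in the language
  obtain ⟨M, c, d, e, hint⟩ := interior_occ hcard hner hprim (n+1) a
  have hmid : b' :: (τ n a ++ [b]) <:+: wordApply (τ n) [d, a, e] := by
    refine ⟨(τ n d).dropLast, (τ n e).tail, ?_⟩
    have h1 : wordApply (τ n) [d, a, e] = τ n d ++ (τ n a ++ τ n e) := by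
      simp [wordApply]
    rw [h1, ← hdrop d]
    conv_rhs => rw [hcons e]
    simp
  have hV2 : wordApply (compSeq τ n) (b' :: (τ n a ++ [b]))
      = compSeq τ n b' ++ (compSeq τ (n+1) a ++ compSeq τ n b) := by
    rw [wordApply_cons, wordApply_append, hw_eq]
    simp [wordApply]
  have hV3 : wordApply (compSeq τ (n+1)) [d, a, e] <:+: compSeq τ (n+1+M) c := by
    have h1 := infix_wordApply (compSeq τ (n+1)) hint
    rwa [show wordApply (compSeq τ (n+1)) (compFrom τ (n+1) M c) = compSeq τ (n+1+M) c by
      show _ = compFrom τ 0 (n+1+M) c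
      rw [compFrom_add τ 0 (n+1) M c, Nat.zero_add]
      rfl] at h1
  have hwordV : wordApply (compSeq τ n) (wordApply (τ n) [d, a, e])
      = wordApply (compSeq τ (n+1)) [d, a, e] := by
    rw [wordApply_wordApply]
    congr 1
    funext z
    rw [hstep]
  have hVmem : compSeq τ n b' ++ (compSeq τ (n+1) a ++ compSeq τ n b) ∈ SadicLang τ := by
    refine ⟨n+1+M, c, ?_⟩
    rw [← hV2]
    exact (infix_wordApply (compSeq τ n) hmid).trans (by rw [hwordV]; exact hV3)
  -- construct a point containing V at position -|s|
  obtain ⟨x₀, hx₀, hOcc⟩ := exists_point_of_extend b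
    (fun u v huv hv => sadicLang_infix huv hv)
    (fun u hu => sadicLang_extend hcard hner hprim hu) hVmem
    (-((compSeq τ n b').length : ℤ))
  set s : List A := compSeq τ n b' with hsdef
  set p : List A := compSeq τ n b with hpdef
  set w : List A := compSeq τ (n+1) a with hwdef
  set x : ↥(SadicShift τ) := ⟨x₀, hx₀⟩ with hxdef
  -- occurrences of w at 0 and of s ++ p at two places
  have h_w0 : OccAt w x₀ 0 := by
    have h1 := occAt_append_right hOcc
    have h2 := occAt_congr (show -((s.length : ℤ)) + s.length = 0 by ring) h1
    exact occAt_append_left h2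
  have hsp1 : OccAt (s ++ p) x₀ (-(s.length : ℤ)) := by
    have hVeq : s ++ (w ++ p) = (s ++ p) ++ (wordApply (compSeq τ n) ((τ n a).tail) ++ p) := by
      conv_lhs => rw [hwp]
      simp
    rw [hVeq] at hOcc
    exact occAt_append_left hOcc
  have hsp2 : OccAt (s ++ p) x₀ ((wordApply (compSeq τ n) ((τ n a).dropLast)).length) := by
    have hVeq : s ++ (w ++ p)
        = (s ++ wordApply (compSeq τ n) ((τ n a).dropLast)) ++ (s ++ p) := by
      conv_lhs => rw [hws]
      simp
    rw [hVeq] at hOcc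
    have h1 := occAt_append_right hOcc
    refine occAt_congr ?_ h1
    simp [List.length_append]
  have hwlen : (w.length : ℤ)
      = (wordApply (compSeq τ n) ((τ n a).dropLast)).length + s.length := by
    conv_lhs => rw [hws]
    push_cast [List.length_append]
    ring
  -- the dynamics
  set T : ↥(SadicShift τ) → ↥(SadicShift τ) := shiftOn (SadicShift τ) hS with hTdef
  have hTiter : ∀ (m : ℕ) (z : ↥(SadicShift τ)) (j : ℤ), ((T^[m]) z).1 j = z.1 (j + m) := by
    intro m
    induction m with
    | zero => intro z j; simp
    | succ m ih =>
        intro z j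
        rw [Function.iterate_succ_apply]
        rw [ih (T z) j]
        show z.1 (j + m + 1) = z.1 (j + (m + 1 : ℕ))
        congr 1
        push_cast
        ring
  set y : ↥(SadicShift τ) := (T^[w.length]) x with hydef
  -- agreement of x and y on the window [-L, L]
  have hagree : ∀ i : ℤ, -(L : ℤ) ≤ i → i ≤ L → x.1 i = y.1 i := by
    intro i hi1 hi2
    have hLs : (L : ℤ) < s.length := by exact_mod_cast hn b'
    have hLp : (L : ℤ) < p.length := by exact_mod_cast hn b
    have hy : y.1 i = x₀ (i + w.length) := hTiter w.length x i
    have hj : (i + (s.length : ℤ)).toNat < (s ++ p).length := by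
      rw [List.length_append]; omega
    have e1 := hsp1 ⟨(i + (s.length : ℤ)).toNat, hj⟩
    have e2 := hsp2 ⟨(i + (s.length : ℤ)).toNat, hj⟩
    have hi1' : -(s.length : ℤ) + ((i + (s.length : ℤ)).toNat : ℤ) = i := by omega
    have hi2' : ((wordApply (compSeq τ n) ((τ n a).dropLast)).length : ℤ)
        + ((i + (s.length : ℤ)).toNat : ℤ) = i + w.length := by omega
    rw [hi1'] at e1
    rw [hi2'] at e2
    show x₀ i = y.1 i
    rw [hy, e1, e2]
  have hgxy : g x = g y := hL x y hagree
  -- telescoping sum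
  have halpha : ∀ c0 : A, ∑ c : A, α c * (if c0 = c then (1:ℤ) else 0) = α c0 := by
    intro c0
    rw [Finset.sum_congr rfl fun c _ => by rw [mul_ite, mul_one, mul_zero]]
    simpa using Finset.sum_ite_eq Finset.univ c0 α
  have htel : ∑ i ∈ Finset.range w.length, (g ((T^[i+1]) x) - g ((T^[i]) x))
      = g ((T^[w.length]) x) - g ((T^[0]) x) :=
    Finset.sum_range_sub (fun i => g ((T^[i]) x)) w.length
  have hterm : ∀ i : ℕ, i < w.length → g ((T^[i+1]) x) - g ((T^[i]) x) = α (x₀ (i : ℤ)) := by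
    intro i hi
    rw [Function.iterate_succ_apply']
    rw [← h ((T^[i]) x)]
    have hx0 : ((T^[i]) x).1 0 = x₀ (i : ℤ) := by
      rw [hTiter i x 0]
      norm_num
      rfl
    rw [hx0, halpha]
  have hsum0 : ∑ i ∈ Finset.range w.length, α (x₀ (i : ℤ)) = 0 := by
    rw [← Finset.sum_congr rfl fun i hi => hterm i (Finset.mem_range.1 hi), htel]
    rw [show (T^[0]) x = x from rfl, ← hydef, ← hgxy]
    ring
  -- convert the orbit sum into letter counts
  have hsum1 : ∑ i ∈ Finset.range w.length, α (x₀ (i : ℤ))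
      = ∑ i ∈ Finset.range w.length, α (w.getD i b) := by
    refine Finset.sum_congr rfl fun i hi => ?_
    have hi' := Finset.mem_range.1 hi
    have := h_w0 ⟨i, hi'⟩
    rw [show (0 : ℤ) + (i : ℤ) = (i : ℤ) by ring] at this
    rw [this]
    congr 1
    rw [List.getD_eq_getElem?_getD, List.getElem?_eq_getElem hi']
    simp [List.get_eq_getElem]
  rw [hsum1, sum_getD_map w α b, sum_map_eq_sum_count w α] at hsum0
  exact hsum0
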